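/- Let G be a finite simple undirected graph and let {p1,p2,p3} induce a triangle in G. The number of unordered pairs {v1,v2} ⊆ adj({p1,p2,p3}) such that the subgraph induced on {p1,p2,p3,v1,v2} is the complete graph K5 minus exactly one edge equals C(n_z,2) − m(Z,Z) + m(Y12,Z) + m(Y13,Z) + m(Y23,Z) (Theorem 3, Table 6, K5-minus-an-edge row). -/

import Mathlib

open Finset

variable {V : Type*}

/-- `adj(W)`: vertices outside `W` having a neighbor in `W`. -/
def adjW [Fintype V] [DecidableEq V] (G : SimpleGraph V) [DecidableRel G.Adj] (W : Finset V) :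
    Finset V :=
  univ.filter fun x => x ∉ W ∧ ∃ w ∈ W, G.Adj x w

/-- `m(S,T)`: the number of edges of `G` with one endpoint in `S` and the other in `T`. -/
def mE [DecidableEq V] (G : SimpleGraph V) [DecidableRel G.Adj] (S T : Finset V) : ℕ :=
  (((S ×ˢ T).filter fun p => G.Adj p.1 p.2).image fun p => ({p.1, p.2} : Finset V)).card

/-- `Z`: vertices (outside the triangle) adjacent to all of `p₁`, `p₂`, `p₃`. -/
def tZ [Fintype V] (G : SimpleGraph V) [DecidableRel G.Adj] (p₁ p₂ p₃ : V) : Finset V :=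
  univ.filter fun w => G.Adj p₁ w ∧ G.Adj p₂ w ∧ G.Adj p₃ w

/-- `Y₁₂`-style set: vertices outside the triangle adjacent to exactly `pa` and `pb`
(and not to `pc`). -/
def tY [Fintype V] [DecidableEq V] (G : SimpleGraph V) [DecidableRel G.Adj]
    (pa pb pc : V) : Finset V :=
  univ.filter fun w => w ≠ pc ∧ G.Adj pa w ∧ G.Adj pb w ∧ ¬ G.Adj pc w

/-! Since `p₁p₂p₃` is a triangle, the missing edge of `{p₁, p₂, p₃, v₁, v₂}` is either `v₁v₂` or
some `pₖvⱼ`. Adding one vertex at a time, `insert v S` is a clique minus an edge iff either `S` is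
a clique and `v` has exactly one non-neighbour in `S`, or `S` is a clique minus an edge and `v`
sees all of `S`. Applied twice to the triangle, the good pairs are the non-adjacent pairs inside
`Z`, counted by `C(n_z, 2) − m(Z, Z)`, and the edges from a vertex of some `Yᵢⱼ` (the vertices
with exactly one non-neighbour `pₖ`) to `Z`; these classes are disjoint because `Y₁₂`, `Y₁₃`,
`Y₂₃` and `Z` are. -/

section UnorderedPairs

variable [DecidableEq V]

lemma Finset.pair_eq_pair_iff {a b c d : V} :
    ({a, b} : Finset V) = {c, d} ↔ a = c ∧ b = d ∨ a = d ∧ b = c := by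
  rw [← coe_inj, coe_pair, coe_pair, Set.pair_eq_pair_iff]

def pairFinset (r : V → V → Prop) [DecidableRel r] (S T : Finset V) : Finset (Finset V) :=
  ((S ×ˢ T).filter fun p => r p.1 p.2).image fun p => {p.1, p.2}

variable {r r' : V → V → Prop} [DecidableRel r] [DecidableRel r']

lemma mem_pairFinset {S T s : Finset V} :
    s ∈ pairFinset r S T ↔ ∃ a ∈ S, ∃ b ∈ T, r a b ∧ {a, b} = s := by
  simp [pairFinset, and_assoc]

lemma image_filter_eq_pairFinset {p : V × V → Prop} [DecidablePred p] {S T : Finset V}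
    (h : ∀ a b, r a b ↔ p (a, b)) :
    ((S ×ˢ T).filter p).image (fun q => {q.1, q.2}) = pairFinset r S T := by
  rw [pairFinset, filter_congr fun q _ => (h q.1 q.2).symm]

lemma pairFinset_union_left (S S' T : Finset V) :
    pairFinset r (S ∪ S') T = pairFinset r S T ∪ pairFinset r S' T := by
  simp only [pairFinset, union_product, filter_union, image_union]

lemma disjoint_pairFinset {S T S' T' : Finset V} (h : Disjoint S (S' ∪ T')) :
    Disjoint (pairFinset r S T) (pairFinset r' S' T') := by
  refine disjoint_left.2 fun s hs hs' => ?_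
  obtain ⟨a, ha, b, -, -, rfl⟩ := mem_pairFinset.1 hs
  obtain ⟨c, hc, d, hd, -, hcd⟩ := mem_pairFinset.1 hs'
  have hacd : a ∈ ({c, d} : Finset V) := hcd ▸ mem_insert_self a {b}
  exact disjoint_left.1 h ha (by grind)

lemma pairFinset_ne_eq_powersetCard (S : Finset V) :
    pairFinset (· ≠ ·) S S = S.powersetCard 2 := by
  ext s
  rw [mem_pairFinset, mem_powersetCard, card_eq_two]
  constructor
  · rintro ⟨a, ha, b, hb, hab, rfl⟩
    exact ⟨insert_subset ha (singleton_subset_iff.2 hb), a, b, hab, rfl⟩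
  · rintro ⟨hs, a, b, hab, rfl⟩
    exact ⟨a, hs (mem_insert_self a {b}), b, hs (by simp), hab, rfl⟩

end UnorderedPairs

lemma card_pairFinset_nonadj_add_mE [DecidableEq V] (G : SimpleGraph V) [DecidableRel G.Adj]
    (S : Finset V) :
    #(pairFinset (fun a b => a ≠ b ∧ ¬ G.Adj a b) S S) + mE G S S = (#S).choose 2 := by
  change _ + #(pairFinset G.Adj S S) = _
  rw [← card_powersetCard, ← pairFinset_ne_eq_powersetCard, ← card_union_of_disjoint]
  · congr 1
    ext s
    simp only [mem_union, mem_pairFinset]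
    constructor
    · rintro (⟨a, ha, b, hb, ⟨hab, -⟩, rfl⟩ | ⟨a, ha, b, hb, hadj, rfl⟩)
      exacts [⟨a, ha, b, hb, hab, rfl⟩, ⟨a, ha, b, hb, hadj.ne, rfl⟩]
    · rintro ⟨a, ha, b, hb, hab, rfl⟩
      by_cases hadj : G.Adj a b
      exacts [Or.inr ⟨a, ha, b, hb, hadj, rfl⟩, Or.inl ⟨a, ha, b, hb, ⟨hab, hadj⟩, rfl⟩]
  · refine disjoint_left.2 fun s hs hs' => ?_
    obtain ⟨a, -, b, -, ⟨-, hn⟩, rfl⟩ := mem_pairFinset.1 hs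
    obtain ⟨c, -, d, -, hadj, hcd⟩ := mem_pairFinset.1 hs'
    rcases Finset.pair_eq_pair_iff.1 hcd with ⟨rfl, rfl⟩ | ⟨rfl, rfl⟩
    exacts [hn hadj, hn hadj.symm]

namespace SimpleGraph

variable [DecidableEq V] {G : SimpleGraph V}

variable (G) in
def IsCliqueMinusEdge (S : Finset V) : Prop :=
  ∃ x ∈ S, ∃ y ∈ S, x ≠ y ∧ ¬ G.Adj x y ∧
    ∀ w ∈ S, ∀ z ∈ S, w ≠ z → ({w, z} : Finset V) ≠ {x, y} → G.Adj w z

instance (S : Finset V) [DecidableRel G.Adj] : Decidable (G.IsCliqueMinusEdge S) :=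
  inferInstanceAs <| Decidable <| ∃ x ∈ S, ∃ y ∈ S, x ≠ y ∧ ¬ G.Adj x y ∧
    ∀ w ∈ S, ∀ z ∈ S, w ≠ z → ({w, z} : Finset V) ≠ {x, y} → G.Adj w z

variable (G) in
def HasUniqueNonNeighborIn (v : V) (S : Finset V) : Prop :=
  ∃ u ∈ S, ¬ G.Adj v u ∧ ∀ w ∈ S, w ≠ u → G.Adj v w

lemma IsClique.not_isCliqueMinusEdge {S : Finset V} (hS : G.IsClique (S : Set V)) :
    ¬ G.IsCliqueMinusEdge S := by
  rintro ⟨x, hx, y, hy, hxy, hn, -⟩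
  exact hn (hS hx hy hxy)

lemma isCliqueMinusEdge_insert {v : V} {S : Finset V} (hv : v ∉ S) :
    G.IsCliqueMinusEdge (insert v S) ↔
      (G.IsClique (S : Set V) ∧ G.HasUniqueNonNeighborIn v S) ∨
        (G.IsCliqueMinusEdge S ∧ ∀ w ∈ S, G.Adj v w) := by
  constructor
  · rintro ⟨x, hx, y, hy, hxy, hn, hall⟩
    have hallS : ∀ w ∈ S, ∀ z ∈ S, w ≠ z → ({w, z} : Finset V) ≠ {x, y} → G.Adj w z :=
      fun w hw z hz => hall w (mem_insert_of_mem hw) z (mem_insert_of_mem hz)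
    by_cases hvxy : v = x ∨ v = y
    · obtain ⟨u, hu, hnu, hpair⟩ : ∃ u ∈ S, ¬ G.Adj v u ∧ ({v, u} : Finset V) = {x, y} := by
        rcases hvxy with rfl | rfl
        · exact ⟨y, (mem_insert.1 hy).resolve_left hxy.symm, hn, rfl⟩
        · exact ⟨x, (mem_insert.1 hx).resolve_left hxy, fun h => hn h.symm, pair_comm _ _⟩
      refine Or.inl ⟨fun w hw z hz hwz => hallS w hw z hz hwz ?_, u, hu, hnu, fun w hw hwu => ?_⟩
      · rw [← hpair]
        exact (ne_of_mem_of_not_mem' (mem_insert_self v {u}) (by grind)).symm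
      · refine hall v (mem_insert_self v S) w (mem_insert_of_mem hw) (by grind) ?_
        rw [← hpair, pair_comm v w, pair_comm v u]
        exact (ne_of_mem_of_not_mem' (mem_insert_self u {v}) (by grind)).symm
    · have hxS : x ∈ S := (mem_insert.1 hx).resolve_left (by grind)
      have hyS : y ∈ S := (mem_insert.1 hy).resolve_left (by grind)
      refine Or.inr ⟨⟨x, hxS, y, hyS, hxy, hn, hallS⟩, fun w hw => ?_⟩
      exact hall v (mem_insert_self v S) w (mem_insert_of_mem hw) (by grind)
        (ne_of_mem_of_not_mem' (mem_insert_self v {w}) (by grind))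
  · rintro (⟨hS, u, hu, hnu, hvS⟩ | ⟨⟨x, hx, y, hy, hxy, hn, hall⟩, hvS⟩)
    · refine ⟨v, mem_insert_self v S, u, mem_insert_of_mem hu, (ne_of_mem_of_not_mem hu hv).symm,
        hnu, fun w hw z hz hwz hp => ?_⟩
      rcases mem_insert.1 hw with rfl | hwS <;> rcases mem_insert.1 hz with rfl | hzS
      · exact absurd rfl hwz
      · exact hvS z hzS (by rintro rfl; exact hp rfl)
      · exact (hvS w hwS (by rintro rfl; exact hp (pair_comm _ _))).symm
      · exact hS hwS hzS hwz
    · refine ⟨x, mem_insert_of_mem hx, y, mem_insert_of_mem hy, hxy, hn, fun w hw z hz hwz hp => ?_⟩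
      rcases mem_insert.1 hw with rfl | hwS <;> rcases mem_insert.1 hz with rfl | hzS
      · exact absurd rfl hwz
      · exact hvS z hzS
      · exact (hvS w hwS).symm
      · exact hall w hwS z hzS hwz hp

lemma hasUniqueNonNeighborIn_insert {a b : V} {T : Finset V} (hb : b ∉ T) :
    G.HasUniqueNonNeighborIn a (insert b T) ↔
      (¬ G.Adj a b ∧ ∀ w ∈ T, G.Adj a w) ∨ (G.Adj a b ∧ G.HasUniqueNonNeighborIn a T) := by
  simp only [HasUniqueNonNeighborIn, exists_mem_insert, forall_mem_insert]
  grind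

lemma isCliqueMinusEdge_insert_insert {a b : V} {T : Finset V} (hT : G.IsClique (T : Set V))
    (ha : a ∉ T) (hb : b ∉ T) (hab : a ≠ b) :
    G.IsCliqueMinusEdge (insert a (insert b T)) ↔
      ((∀ w ∈ T, G.Adj a w) ∧ (∀ w ∈ T, G.Adj b w) ∧ ¬ G.Adj a b) ∨
        (G.Adj a b ∧ ((G.HasUniqueNonNeighborIn a T ∧ ∀ w ∈ T, G.Adj b w) ∨
          (G.HasUniqueNonNeighborIn b T ∧ ∀ w ∈ T, G.Adj a w))) := by
  rw [isCliqueMinusEdge_insert (by simp [hab, ha]), isCliqueMinusEdge_insert hb, coe_insert,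
    isClique_insert, hasUniqueNonNeighborIn_insert hb, forall_mem_insert]
  simp only [hT, hT.not_isCliqueMinusEdge, true_and, false_and]
  grind [adj_comm]

end SimpleGraph

section Triangle

variable [Fintype V] [DecidableEq V] {G : SimpleGraph V} [DecidableRel G.Adj] {p₁ p₂ p₃ : V}

open SimpleGraph

variable (G p₁ p₂ p₃) in
def tYs : Finset V := tY G p₁ p₂ p₃ ∪ tY G p₁ p₃ p₂ ∪ tY G p₂ p₃ p₁

lemma mem_tZ_iff {v : V} : v ∈ tZ G p₁ p₂ p₃ ↔ ∀ w ∈ ({p₁, p₂, p₃} : Finset V), G.Adj v w := by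
  simp [tZ, SimpleGraph.adj_comm]

lemma mem_tYs_iff (h12 : G.Adj p₁ p₂) (h13 : G.Adj p₁ p₃) (h23 : G.Adj p₂ p₃) {v : V} :
    v ∈ tYs G p₁ p₂ p₃ ↔
      v ∉ ({p₁, p₂, p₃} : Finset V) ∧ G.HasUniqueNonNeighborIn v {p₁, p₂, p₃} := by
  have := h12.ne; have := h13.ne; have := h23.ne
  simp only [tYs, tY, HasUniqueNonNeighborIn, mem_union, mem_filter, mem_univ, true_and,
    mem_insert, mem_singleton, exists_eq_or_imp, forall_eq_or_imp, exists_eq_left, forall_eq]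
  grind [SimpleGraph.adj_comm, G.loopless]

lemma notMem_of_mem_adjW {W : Finset V} {v : V} (hv : v ∈ adjW G W) : v ∉ W :=
  (mem_filter.1 hv).2.1

lemma tZ_subset_adjW : tZ G p₁ p₂ p₃ ⊆ adjW G {p₁, p₂, p₃} := fun v hv =>
  have h := mem_tZ_iff.1 hv
  mem_filter.2 ⟨mem_univ v, fun hvT => (h v hvT).ne rfl, p₁, by simp, h p₁ (by simp)⟩

lemma tYs_subset_adjW (h12 : G.Adj p₁ p₂) (h13 : G.Adj p₁ p₃) (h23 : G.Adj p₂ p₃) :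
    tYs G p₁ p₂ p₃ ⊆ adjW G {p₁, p₂, p₃} := by
  intro v hv
  refine mem_filter.2 ⟨mem_univ v, ((mem_tYs_iff h12 h13 h23).1 hv).1, ?_⟩
  simp only [tYs, tY, mem_union, mem_filter, mem_univ, true_and] at hv
  rcases hv with (h | h) | h
  exacts [⟨p₁, by simp, h.2.1.symm⟩, ⟨p₁, by simp, h.2.1.symm⟩, ⟨p₂, by simp, h.2.1.symm⟩]

lemma isCliqueMinusEdge_triangle_insert_insert_iff (h12 : G.Adj p₁ p₂) (h13 : G.Adj p₁ p₃)
    (h23 : G.Adj p₂ p₃) {a b : V} (ha : a ∉ ({p₁, p₂, p₃} : Finset V))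
    (hb : b ∉ ({p₁, p₂, p₃} : Finset V)) (hab : a ≠ b) :
    G.IsCliqueMinusEdge {p₁, p₂, p₃, a, b} ↔
      (a ∈ tZ G p₁ p₂ p₃ ∧ b ∈ tZ G p₁ p₂ p₃ ∧ ¬ G.Adj a b) ∨
        (G.Adj a b ∧ (a ∈ tYs G p₁ p₂ p₃ ∧ b ∈ tZ G p₁ p₂ p₃ ∨
          b ∈ tYs G p₁ p₂ p₃ ∧ a ∈ tZ G p₁ p₂ p₃)) := by
  have hT : G.IsClique (({p₁, p₂, p₃} : Finset V) : Set V) :=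
    (is3Clique_triple_iff.2 ⟨h12, h13, h23⟩).isClique
  have hset : ({p₁, p₂, p₃, a, b} : Finset V) = insert a (insert b {p₁, p₂, p₃}) := by
    ext; simp only [mem_insert, mem_singleton]; tauto
  rw [hset, isCliqueMinusEdge_insert_insert hT ha hb hab, mem_tZ_iff, mem_tZ_iff,
    mem_tYs_iff h12 h13 h23, mem_tYs_iff h12 h13 h23]
  simp only [ha, hb, not_false_eq_true, true_and]

lemma pairFinset_isCliqueMinusEdge_eq (h12 : G.Adj p₁ p₂) (h13 : G.Adj p₁ p₃)
    (h23 : G.Adj p₂ p₃) :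
    pairFinset (fun a b => a ≠ b ∧ G.IsCliqueMinusEdge {p₁, p₂, p₃, a, b})
        (adjW G {p₁, p₂, p₃}) (adjW G {p₁, p₂, p₃}) =
      pairFinset (fun a b => a ≠ b ∧ ¬ G.Adj a b) (tZ G p₁ p₂ p₃) (tZ G p₁ p₂ p₃) ∪
        pairFinset G.Adj (tYs G p₁ p₂ p₃) (tZ G p₁ p₂ p₃) := by
  have key {a b : V} (ha : a ∈ adjW G {p₁, p₂, p₃}) (hb : b ∈ adjW G {p₁, p₂, p₃}) (hab : a ≠ b) :=
    isCliqueMinusEdge_triangle_insert_insert_iff h12 h13 h23 (notMem_of_mem_adjW ha)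
      (notMem_of_mem_adjW hb) hab
  ext s
  simp only [mem_union, mem_pairFinset]
  constructor
  · rintro ⟨a, ha, b, hb, ⟨hab, hG⟩, rfl⟩
    rcases (key ha hb hab).1 hG with ⟨haZ, hbZ, hn⟩ | ⟨hadj, ⟨haY, hbZ⟩ | ⟨hbY, haZ⟩⟩
    · exact Or.inl ⟨a, haZ, b, hbZ, ⟨hab, hn⟩, rfl⟩
    · exact Or.inr ⟨a, haY, b, hbZ, hadj, rfl⟩
    · exact Or.inr ⟨b, hbY, a, haZ, hadj.symm, pair_comm b a⟩
  · rintro (⟨a, haZ, b, hbZ, ⟨hab, hn⟩, rfl⟩ | ⟨a, haY, b, hbZ, hadj, rfl⟩)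
    · have ha := tZ_subset_adjW haZ
      have hb := tZ_subset_adjW hbZ
      exact ⟨a, ha, b, hb, ⟨hab, (key ha hb hab).2 (Or.inl ⟨haZ, hbZ, hn⟩)⟩, rfl⟩
    · have ha := tYs_subset_adjW h12 h13 h23 haY
      have hb := tZ_subset_adjW hbZ
      exact ⟨a, ha, b, hb, ⟨hadj.ne, (key ha hb hadj.ne).2 (Or.inr ⟨hadj, Or.inl ⟨haY, hbZ⟩⟩)⟩,
        rfl⟩

lemma disjoint_tY_of_forall_adj {pa pb pc : V} {U : Finset V} (h : ∀ u ∈ U, G.Adj pc u) :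
    Disjoint (tY G pa pb pc) U :=
  Finset.disjoint_left.2 fun v hv hU => (mem_filter.1 hv).2.2.2.2 (h v hU)

lemma disjoint_tYs_tZ : Disjoint (tYs G p₁ p₂ p₃) (tZ G p₁ p₂ p₃) := by
  simp only [tYs, disjoint_union_left]
  refine ⟨⟨?_, ?_⟩, ?_⟩ <;> refine disjoint_tY_of_forall_adj fun u hu => ?_ <;>
    simp_all [tZ]

lemma card_pairFinset_tYs_tZ :
    #(pairFinset G.Adj (tYs G p₁ p₂ p₃) (tZ G p₁ p₂ p₃)) =
      mE G (tY G p₁ p₂ p₃) (tZ G p₁ p₂ p₃) + mE G (tY G p₁ p₃ p₂) (tZ G p₁ p₂ p₃) +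
        mE G (tY G p₂ p₃ p₁) (tZ G p₁ p₂ p₃) := by
  rw [tYs, pairFinset_union_left, pairFinset_union_left, card_union_of_disjoint,
    card_union_of_disjoint]
  · rfl
  · refine disjoint_pairFinset (disjoint_tY_of_forall_adj fun u hu => ?_)
    simp only [tY, tZ, mem_union, mem_filter, mem_univ, true_and] at hu; tauto
  · refine Finset.disjoint_union_left.2 ⟨?_, ?_⟩ <;>
      refine disjoint_pairFinset (disjoint_tY_of_forall_adj fun u hu => ?_) <;>
      simp only [tY, tZ, mem_union, mem_filter, mem_univ, true_and] at hu <;> tauto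

end Triangle

/-- Theorem 3, Table 6, `K₅`-minus-an-edge row: for a triangle `{p₁,p₂,p₃}`, the number of
unordered pairs `{v₁,v₂} ⊆ adj({p₁,p₂,p₃})` such that the induced subgraph on
`{p₁,p₂,p₃,v₁,v₂}` is `K₅` minus exactly one edge equals
`C(n_z,2) − m(Z,Z) + m(Y₁₂,Z) + m(Y₁₃,Z) + m(Y₂₃,Z)`. -/
theorem stmt17 [Fintype V] [DecidableEq V] (G : SimpleGraph V) [DecidableRel G.Adj]
    (p₁ p₂ p₃ : V) (h12 : G.Adj p₁ p₂) (h13 : G.Adj p₁ p₃) (h23 : G.Adj p₂ p₃) :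
    (((((adjW G {p₁, p₂, p₃}) ×ˢ (adjW G {p₁, p₂, p₃})).filter fun p =>
        p.1 ≠ p.2 ∧
        ∃ x ∈ ({p₁, p₂, p₃, p.1, p.2} : Finset V), ∃ y ∈ ({p₁, p₂, p₃, p.1, p.2} : Finset V),
          x ≠ y ∧ ¬ G.Adj x y ∧
          ∀ w ∈ ({p₁, p₂, p₃, p.1, p.2} : Finset V),
            ∀ z ∈ ({p₁, p₂, p₃, p.1, p.2} : Finset V),
              w ≠ z → ({w, z} : Finset V) ≠ {x, y} → G.Adj w z).image
      fun p => ({p.1, p.2} : Finset V)).card : ℤ)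
      = (Nat.choose (tZ G p₁ p₂ p₃).card 2 : ℤ)
        - mE G (tZ G p₁ p₂ p₃) (tZ G p₁ p₂ p₃)
        + mE G (tY G p₁ p₂ p₃) (tZ G p₁ p₂ p₃)
        + mE G (tY G p₁ p₃ p₂) (tZ G p₁ p₂ p₃)
        + mE G (tY G p₂ p₃ p₁) (tZ G p₁ p₂ p₃) := by
  rw [image_filter_eq_pairFinset (r := fun a b => a ≠ b ∧ G.IsCliqueMinusEdge {p₁, p₂, p₃, a, b})
      fun _ _ => Iff.rfl,
    pairFinset_isCliqueMinusEdge_eq h12 h13 h23,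
    card_union_of_disjoint (disjoint_pairFinset (by simpa using disjoint_tYs_tZ)).symm,
    card_pairFinset_tYs_tZ, ← card_pairFinset_nonadj_add_mE G (tZ G p₁ p₂ p₃)]
  push_cast
  ring
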